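/- arXiv:1711.08650 — 9 statements merged into one kernel-verified Lean document; each statement's English description precedes it below -/
import Mathlib

section
/- If H is a characteristic subgroup of a group G and the quotient G/H has the R∞ property, then G has the R∞ property. -/
/-- The twisted conjugacy relation determined by an endomorphism `φ`. -/
def twistedRel {G : Type*} [Group G] (φ : G →* G) (x y : G) : Prop :=
  ∃ z : G, x = z * y * (φ z)⁻¹

/-- The setoid of `φ`-twisted conjugacy. -/
def twistedSetoid {G : Type*} [Group G] (φ : G →* G) : Setoid G :=
  ⟨twistedRel φ, by
    constructor
    · intro x; exact ⟨1, by simp⟩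
    · rintro x y ⟨z, rfl⟩
      exact ⟨z⁻¹, by simp [mul_assoc]⟩
    · rintro x y w ⟨z₁, rfl⟩ ⟨z₂, hz₂⟩
      subst hz₂
      exact ⟨z₁ * z₂, by simp [mul_assoc]⟩⟩

/-- A group has the `R∞` property if every automorphism has infinitely many twisted
conjugacy classes. -/
def hasRinf (G : Type*) [Group G] : Prop :=
  ∀ φ : G ≃* G, Infinite (Quotient (twistedSetoid φ.toMonoidHom))

/-! A characteristic subgroup `H` is preserved by every automorphism `φ` of `G`, so `φ` descends
to an automorphism `ψ` of `G ⧸ H`. The projection `G → G ⧸ H` intertwines `φ` and `ψ`, hence maps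
`φ`-twisted classes onto `ψ`-twisted classes; infinitely many of the latter force infinitely
many of the former. -/

section TwistedConjugacy

variable {G Q : Type*} [Group G] [Group Q]

theorem twistedRel.map (f : G →* Q) {φ : G →* G} {ψ : Q →* Q}
    (hf : ∀ g, f (φ g) = ψ (f g)) {x y : G} (h : twistedRel φ x y) :
    twistedRel ψ (f x) (f y) := by
  obtain ⟨z, rfl⟩ := h
  exact ⟨f z, by rw [map_mul, map_mul, map_inv, hf]⟩

theorem infinite_twistedClasses_of_surjective (f : G →* Q) (hsurj : Function.Surjective f)
    {φ : G →* G} {ψ : Q →* Q} (hf : ∀ g, f (φ g) = ψ (f g))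
    [Infinite (Quotient (twistedSetoid ψ))] : Infinite (Quotient (twistedSetoid φ)) :=
  Infinite.of_surjective _ <|
    Quotient.map_surjective (sa := twistedSetoid φ) (sb := twistedSetoid ψ)
      (fun _ _ => twistedRel.map f hf) hsurj

end TwistedConjugacy

/-- If `H` is a characteristic subgroup of `G` and `G ⧸ H` has the `R∞` property, then so
does `G`. -/
theorem rinf_of_quotient_rinf {G : Type*} [Group G] (H : Subgroup G) [H.Normal]
    (hchar : H.Characteristic) (hq : hasRinf (G ⧸ H)) : hasRinf G := by
  intro φ
  have hφH : H.map φ.toMonoidHom = H := Subgroup.characteristic_iff_map_eq.mp hchar φ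
  let ψ : (G ⧸ H) ≃* (G ⧸ H) := QuotientGroup.congr H H φ hφH
  have := hq ψ
  exact infinite_twistedClasses_of_surjective (QuotientGroup.mk' H)
    (QuotientGroup.mk'_surjective H) (ψ := ψ.toMonoidHom) fun _ => rfl
end

section
/- The Reidemeister spectrum of ℤ² is ℕ ∪ {∞}: for every positive integer m there is an automorphism of ℤ² with Reidemeister number m, and there is one with infinite Reidemeister number. -/
/-!
Twisted conjugacy classes of an automorphism `φ` of an abelian group `A` are the cosets of
the image of `id - φ`, so the Reidemeister number is the index of that image. For
`φ = M ∈ GL n ℤ` this index is `|det (1 - M)|` whenever the determinant is nonzero (Smith normal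
form). The matrix `!![0, -1; 1, 2 - m]` lies in `SL₂(ℤ)` and has `det (1 - M) = m`, and the
identity has trivial twisted classes, hence infinitely many of them.
-/

/-- The twisted conjugacy setoid for an endomorphism of an additive abelian group:
`x ∼ y ↔ ∃ z, x = z + y - φ z`. -/
def addTwistedSetoid {A : Type*} [AddCommGroup A] (φ : A ≃+ A) : Setoid A :=
  ⟨fun x y => ∃ z : A, x = z + y - φ z, by
    constructor
    · intro x; exact ⟨0, by simp⟩
    · rintro x y ⟨z, rfl⟩; exact ⟨-z, by simp; abel⟩
    · rintro x y w ⟨z₁, rfl⟩ ⟨z₂, hz₂⟩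
      subst hz₂
      exact ⟨z₁ + z₂, by simp; abel⟩⟩

open Matrix

section AddTwisted

variable {A : Type*} [AddCommGroup A]

theorem addTwistedSetoid_r_iff (φ : A ≃+ A) {x y : A} :
    (addTwistedSetoid φ).r x y ↔ -x + y ∈ (AddMonoidHom.id A - φ.toAddMonoidHom).range := by
  constructor
  · rintro ⟨z, rfl⟩
    exact ⟨-z, by simp; abel⟩
  · rintro ⟨z, hz⟩
    have hy : y = x + (z - φ z) := by
      simp only [AddMonoidHom.sub_apply, AddMonoidHom.id_apply, AddEquiv.coe_toAddMonoidHom] at hz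
      rw [hz]; abel
    exact ⟨-z, by rw [hy, map_neg]; abel⟩

theorem card_quotient_addTwistedSetoid (φ : A ≃+ A) :
    Nat.card (Quotient (addTwistedSetoid φ)) =
      (AddMonoidHom.id A - φ.toAddMonoidHom).range.index :=
  Nat.card_congr <| Quotient.congr (Equiv.refl A) fun _ _ =>
    (addTwistedSetoid_r_iff φ).trans QuotientAddGroup.leftRel_apply.symm

instance [Infinite A] : Infinite (Quotient (addTwistedSetoid (AddEquiv.refl A))) :=
  Infinite.of_injective (Quotient.mk _) fun x y h => by
    obtain ⟨z, hz⟩ := Quotient.exact h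
    simpa using hz

end AddTwisted

theorem Matrix.index_range_mulVecLin {n : Type*} [Fintype n] [DecidableEq n]
    (M : Matrix n n ℤ) (h : M.det ≠ 0) :
    M.mulVecLin.toAddMonoidHom.range.index = M.det.natAbs := by
  have hinj : Function.Injective (toLin' M) := mulVec_injective_of_det_ne_zero h
  have hcard := Submodule.natAbs_det_equiv (LinearMap.range (toLin' M))
    (LinearEquiv.ofInjective _ hinj)
  have hfactor : (LinearMap.range (toLin' M)).subtype ∘ₗ
      (LinearEquiv.ofInjective _ hinj : (n → ℤ) →+ _).toIntLinearMap = toLin' M := by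
    ext; rfl
  rw [hfactor, LinearMap.det_toLin'] at hcard
  rw [hcard]
  rfl

def Matrix.GeneralLinearGroup.toAddEquiv {n R : Type*} [Fintype n] [DecidableEq n]
    [CommRing R] (M : GL n R) : (n → R) ≃+ (n → R) :=
  (toLin M).toLinearEquiv.toAddEquiv

@[simp]
theorem Matrix.GeneralLinearGroup.toAddEquiv_apply {n R : Type*} [Fintype n] [DecidableEq n]
    [CommRing R] (M : GL n R) (v : n → R) : M.toAddEquiv v = (M : Matrix n n R) *ᵥ v :=
  rfl

theorem card_quotient_addTwistedSetoid_toAddEquiv {n : Type*} [Fintype n] [DecidableEq n]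
    (M : GL n ℤ) (h : (1 - (M : Matrix n n ℤ)).det ≠ 0) :
    Nat.card (Quotient (addTwistedSetoid M.toAddEquiv)) =
      (1 - (M : Matrix n n ℤ)).det.natAbs := by
  have hsub : AddMonoidHom.id (n → ℤ) - M.toAddEquiv.toAddMonoidHom =
      (1 - (M : Matrix n n ℤ)).mulVecLin.toAddMonoidHom :=
    AddMonoidHom.ext fun v => by simp
  rw [card_quotient_addTwistedSetoid, hsub, index_range_mulVecLin _ h]

theorem exists_GL_two_det_one_sub_eq (m : ℤ) :
    ∃ M : GL (Fin 2) ℤ, (1 - (M : Matrix (Fin 2) (Fin 2) ℤ)).det = m :=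
  ⟨.mk'' !![0, -1; 1, 2 - m] (by simp [det_fin_two]), by
    simp [det_fin_two, one_fin_two]; ring⟩

/-- The Reidemeister spectrum of `ℤ²` is `ℕ ∪ {∞}`: every positive integer is the
Reidemeister number of some automorphism, and some automorphism has infinite Reidemeister
number. -/
theorem reidemeister_spectrum_Z2 :
    (∀ m : ℕ, 0 < m → ∃ φ : (Fin 2 → ℤ) ≃+ (Fin 2 → ℤ),
      Nat.card (Quotient (addTwistedSetoid φ)) = m) ∧
    (∃ φ : (Fin 2 → ℤ) ≃+ (Fin 2 → ℤ), Infinite (Quotient (addTwistedSetoid φ))) := by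
  refine ⟨fun m hm => ?_, ⟨AddEquiv.refl _, inferInstance⟩⟩
  obtain ⟨M, hM⟩ := exists_GL_two_det_one_sub_eq m
  refine ⟨M.toAddEquiv, ?_⟩
  rw [card_quotient_addTwistedSetoid_toAddEquiv M (by omega), hM, Int.natAbs_natCast]
end

section
/- Let n ≥ 2 be an integer. For every positive integer m there exists a matrix M ∈ GL_n(ℤ) with |det(I − M)| = m; hence the Reidemeister spectrum of ℤⁿ is ℕ ∪ {∞}. -/
/-!
Block-diagonal sums of automorphisms multiply Reidemeister numbers, since `det (1 - M)` is
multiplicative over blocks. The companion matrices of `X² + mX - 1` and `X³ + mX - 1` lie in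
`GL₂(ℤ)` and `GL₃(ℤ)` and have `det (1 - M) = m`, their characteristic polynomials evaluated at `1`.
Padding with blocks of Reidemeister number `1` then reaches every `n ≥ 2`.
-/

open Matrix

/-- `m` is the Reidemeister number `|det (1 - M)|` of some automorphism `M` of `ℤ^ι`. -/
def IsReidemeisterNumber (ι : Type*) [Fintype ι] [DecidableEq ι] (m : ℕ) : Prop :=
  ∃ M : Matrix ι ι ℤ, IsUnit M.det ∧ (1 - M).det.natAbs = m

namespace IsReidemeisterNumber

variable {ι κ : Type*} [Fintype ι] [DecidableEq ι] [Fintype κ] [DecidableEq κ]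

theorem of_equiv (e : ι ≃ κ) {m : ℕ} (h : IsReidemeisterNumber ι m) :
    IsReidemeisterNumber κ m := by
  obtain ⟨M, hM, hM1⟩ := h
  refine ⟨reindexAlgEquiv ℤ ℤ e M, by rwa [det_reindexAlgEquiv], ?_⟩
  rwa [← map_one (reindexAlgEquiv ℤ ℤ e), ← map_sub, det_reindexAlgEquiv]

theorem sum {a b : ℕ} (ha : IsReidemeisterNumber ι a) (hb : IsReidemeisterNumber κ b) :
    IsReidemeisterNumber (ι ⊕ κ) (a * b) := by
  obtain ⟨A, hA, hA1⟩ := ha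
  obtain ⟨D, hD, hD1⟩ := hb
  have one_sub : 1 - fromBlocks A 0 0 D = fromBlocks (1 - A) 0 0 (1 - D) := by
    simp [← fromBlocks_one, sub_eq_add_neg, fromBlocks_neg, fromBlocks_add]
  refine ⟨fromBlocks A 0 0 D, ?_, ?_⟩
  · rw [det_fromBlocks_zero₁₂]
    exact hA.mul hD
  · rw [one_sub, det_fromBlocks_zero₁₂, Int.natAbs_mul, hA1, hD1]

end IsReidemeisterNumber

theorem isReidemeisterNumber_fin_two (m : ℕ) : IsReidemeisterNumber (Fin 2) m := by
  refine ⟨!![0, 1; 1, -(m : ℤ)], ?_, ?_⟩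
  · simp [det_fin_two_of]
  · simp [det_fin_two]

theorem isReidemeisterNumber_fin_three (m : ℕ) : IsReidemeisterNumber (Fin 3) m := by
  refine ⟨!![0, 0, 1; 1, 0, -(m : ℤ); 0, 1, 0], ?_, ?_⟩
  · simp [det_fin_three]
  · simp [det_fin_three]

theorem isReidemeisterNumber_fin (m : ℕ) : ∀ n, 2 ≤ n → IsReidemeisterNumber (Fin n) m
  | 2, _ => isReidemeisterNumber_fin_two m
  | 3, _ => isReidemeisterNumber_fin_three m
  | k + 4, _ => by
    simpa using ((isReidemeisterNumber_fin m (k + 2) (by omega)).sum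
      (isReidemeisterNumber_fin_two 1)).of_equiv finSumFinEquiv

theorem exists_matrix_with_det_one_sub_general (n : ℕ) (hn : 2 ≤ n) (m : ℕ) :
    ∃ M : Matrix (Fin n) (Fin n) ℤ, IsUnit M.det ∧ (1 - M).det.natAbs = m :=
  isReidemeisterNumber_fin m n hn

/-- For `n ≥ 2` and every positive integer `m` there is `M ∈ GL_n(ℤ)` with
`|det (I - M)| = m`; hence the Reidemeister spectrum of `ℤⁿ` is `ℕ ∪ {∞}`. -/
theorem exists_matrix_with_det_one_sub (n : ℕ) (hn : 2 ≤ n) (m : ℕ) (hm : 0 < m) :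
    ∃ M : Matrix (Fin n) (Fin n) ℤ, IsUnit M.det ∧ (1 - M).det.natAbs = m :=
  exists_matrix_with_det_one_sub_general n hn m
end

section
/- Let A ∈ GL_n(ℤ) and let E = ℤⁿ ⋊_A ℤ. If A does not have 1 as an eigenvalue, then the subgroup ℤⁿ is characteristic in E, i.e., every automorphism of E maps ℤⁿ to itself. -/
/-!
`ℤⁿ` is the isolator of the commutator subgroup of `E = ℤⁿ ⋊_A ℤ`, i.e. the set of elements
having a nonzero power in `[E, E]`, a description invariant under every automorphism.
Indeed `[E, E]` is contained in `ℤⁿ` because the quotient `ℤ` is abelian, and `ℤ` is torsion-free;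
conversely `[t, v] = Av - v`, so `[E, E]` contains `(A - 1)ℤⁿ`, which contains `det (1 - A) • ℤⁿ`
by Cramer's rule.
-/

/-- The action of `ℤ` on `ℤⁿ` (written multiplicatively) through an automorphism `e`,
defining the semidirect product `ℤⁿ ⋊ ℤ`. -/
def zAction {V : Type*} [AddCommGroup V] (e : V ≃+ V) :
    Multiplicative ℤ →* MulAut (Multiplicative V) :=
  zpowersHom (MulAut (Multiplicative V)) (AddEquiv.toMultiplicative e)

open scoped commutatorElement

theorem Subgroup.characteristic_of_mem_iff_exists_zpow_mem {G : Type*} [Group G]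
    {H K : Subgroup G} [K.Characteristic] (hH : ∀ g, g ∈ H ↔ ∃ k : ℤ, k ≠ 0 ∧ g ^ k ∈ K) :
    H.Characteristic := by
  refine Subgroup.characteristic_iff_le_comap.mpr fun ϕ g hg => ?_
  obtain ⟨k, hk, hgk⟩ := (hH g).mp hg
  have hK : K ≤ K.comap ϕ.toMonoidHom := Subgroup.characteristic_iff_le_comap.mp ‹_› ϕ
  exact (hH (ϕ g)).mpr ⟨k, hk, by simpa [map_zpow] using hK hgk⟩

namespace SemidirectProduct

theorem inl_aut_mul_inv_eq_commutatorElement {N G : Type*} [Group N] [Group G]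
    {φ : G →* MulAut N} (g : G) (n : N) :
    (inl (φ g n * n⁻¹) : N ⋊[φ] G) = ⁅(inr g : N ⋊[φ] G), inl n⁆ := by
  rw [commutatorElement_def, map_mul, inl_aut, map_inv, map_inv]

theorem inl_aut_mul_inv_mem_commutator {N G : Type*} [Group N] [Group G]
    {φ : G →* MulAut N} (g : G) (n : N) :
    (inl (φ g n * n⁻¹) : N ⋊[φ] G) ∈ commutator (N ⋊[φ] G) := by
  rw [inl_aut_mul_inv_eq_commutatorElement]
  exact Subgroup.commutator_mem_commutator (Subgroup.mem_top _) (Subgroup.mem_top _)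

theorem mem_range_inl_of_zpow_mem_commutator {N G : Type*} [Group N] [CommGroup G]
    [IsMulTorsionFree G] {φ : G →* MulAut N} {x : N ⋊[φ] G} {k : ℤ} (hk : k ≠ 0)
    (hx : x ^ k ∈ commutator (N ⋊[φ] G)) : x ∈ (inl : N →* N ⋊[φ] G).range := by
  rw [range_inl_eq_ker_rightHom, MonoidHom.mem_ker]
  have hxk := Abelianization.commutator_subset_ker rightHom hx
  rwa [MonoidHom.mem_ker, map_zpow, IsMulTorsionFree.zpow_eq_one_iff_left hk] at hxk

end SemidirectProduct

theorem inl_ofAdd_sub_mem_commutator {V : Type*} [AddCommGroup V] (e : V ≃+ V) (u : V) :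
    (SemidirectProduct.inl (Multiplicative.ofAdd (e u - u)) :
      Multiplicative V ⋊[zAction e] Multiplicative ℤ) ∈ commutator _ := by
  have hcomm := SemidirectProduct.inl_aut_mul_inv_mem_commutator (φ := zAction e)
    (Multiplicative.ofAdd (1 : ℤ)) (Multiplicative.ofAdd u)
  rw [zAction, zpowersHom_apply, toAdd_ofAdd, zpow_one] at hcomm
  rw [sub_eq_add_neg]
  exact hcomm

theorem mem_range_inl_iff_exists_zpow_mem_commutator {n : ℕ} {A : Matrix (Fin n) (Fin n) ℤ}
    (h1 : (1 - A).det ≠ 0) {e : (Fin n → ℤ) ≃+ (Fin n → ℤ)} (he : ∀ v, e v = A.mulVec v)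
    (x : Multiplicative (Fin n → ℤ) ⋊[zAction e] Multiplicative ℤ) :
    x ∈ SemidirectProduct.inl.range ↔ ∃ k : ℤ, k ≠ 0 ∧ x ^ k ∈ commutator _ := by
  refine ⟨?_, fun ⟨k, hk, hxk⟩ => SemidirectProduct.mem_range_inl_of_zpow_mem_commutator hk hxk⟩
  rintro ⟨v, rfl⟩
  refine ⟨(1 - A).det, h1, ?_⟩
  have hw : e (-(1 - A).cramer v.toAdd) - -(1 - A).cramer v.toAdd = (1 - A).det • v.toAdd := by
    rw [← Matrix.mulVec_cramer, he, Matrix.sub_mulVec, Matrix.one_mulVec, Matrix.mulVec_neg]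
    abel
  rw [← map_zpow, ← ofAdd_toAdd (v ^ _), toAdd_zpow, ← hw]
  exact inl_ofAdd_sub_mem_commutator e _

theorem Zn_characteristic_in_semidirect_general (n : ℕ) (A : Matrix (Fin n) (Fin n) ℤ)
    (h1 : (1 - A).det ≠ 0)
    (e : (Fin n → ℤ) ≃+ (Fin n → ℤ)) (he : ∀ v, e v = A.mulVec v) :
    (SemidirectProduct.inl.range :
      Subgroup (Multiplicative (Fin n → ℤ) ⋊[zAction e] Multiplicative ℤ)).Characteristic :=
  Subgroup.characteristic_of_mem_iff_exists_zpow_mem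
    (mem_range_inl_iff_exists_zpow_mem_commutator h1 he)

/-- If `A ∈ GL_n(ℤ)` does not have `1` as an eigenvalue (i.e. `det (I - A) ≠ 0`), then
the subgroup `ℤⁿ` of `ℤⁿ ⋊_A ℤ` is characteristic. -/
theorem Zn_characteristic_in_semidirect (n : ℕ) (A : Matrix (Fin n) (Fin n) ℤ)
    (hA : IsUnit A.det) (h1 : (1 - A).det ≠ 0)
    (e : (Fin n → ℤ) ≃+ (Fin n → ℤ)) (he : ∀ v, e v = A.mulVec v) :
    (SemidirectProduct.inl.range :
      Subgroup (Multiplicative (Fin n → ℤ) ⋊[zAction e] Multiplicative ℤ)).Characteristic :=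
  Zn_characteristic_in_semidirect_general n A h1 e he
end

section
/- Let A ∈ GL_n(ℤ) and E = ℤⁿ ⋊_A ℤ. If A does not have 1 as an eigenvalue, then the eigenspace W_{−1} = {z ∈ ℤⁿ : A z = −z} is a characteristic subgroup of E. -/
/-!
The commutator of the generator `t` of `ℤ` with `v ∈ ℤⁿ` is `(A - 1) v`, and since
`det (1 - A) ≠ 0`, Cramer's rule puts `det (1 - A) • ℤⁿ` inside `[E, E]`. An automorphism maps
`[E, E]` into itself, hence into the kernel of `E → ℤ`, and `ℤ` is torsion-free, so `ℤⁿ` is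
characteristic. The automorphism therefore induces an automorphism of `E / ℤⁿ ≅ ℤ` and sends
`t` to `v t^{±1}`, whose conjugation action on `ℤⁿ` is `A^{±1}`. Now `W₋₁` is the set of
`z ∈ ℤⁿ` with `t z t⁻¹ = z⁻¹`, and this relation is carried to `A^{±1} z' = -z'`, i.e. `A z' = -z'`.
-/

open SemidirectProduct Multiplicative

namespace SemidirectProduct

theorem mul_inl_mul_inv {N G : Type*} [CommGroup N] [Group G] {φ : G →* MulAut N}
    (g : N ⋊[φ] G) (x : N) : g * inl x * g⁻¹ = inl (φ g.right x) := by
  ext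
  · simp [mul_comm, mul_assoc]
  · simp

theorem isUnit_toAdd_rightHom_map_inr {N : Type*} [Group N] {φ : Multiplicative ℤ →* MulAut N}
    (ψ : MulAut (N ⋊[φ] Multiplicative ℤ))
    (hψ : ∀ x, ψ (inl x) ∈ (inl : N →* N ⋊[φ] Multiplicative ℤ).range) :
    IsUnit (rightHom (ψ (inr (ofAdd 1)))).toAdd := by
  obtain ⟨g, hg⟩ := (rightHom_surjective.comp ψ.surjective) (ofAdd 1)
  have hg_right : g = inl g.left * inr (ofAdd 1) ^ g.right.toAdd := by
    rw [← map_zpow, ← ofAdd_zsmul, smul_eq_mul, mul_one, ofAdd_toAdd, inl_left_mul_inr_right]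
  have h_left : rightHom (ψ (inl g.left)) = 1 := by
    rw [← MonoidHom.mem_ker, ← range_inl_eq_ker_rightHom]
    exact hψ g.left
  rw [Function.comp_apply, hg_right, map_mul, map_mul, h_left, one_mul, map_zpow, map_zpow] at hg
  exact .of_mul_eq_one g.right.toAdd (by simpa [mul_comm] using congrArg toAdd hg)

end SemidirectProduct

theorem MonoidHom.eq_one_of_zpow_mem_commutator {G : Type*} [Group G] (f : G →* Multiplicative ℤ)
    {g : G} {d : ℤ} (hd : d ≠ 0) (hg : g ^ d ∈ commutator G) : f g = 1 := by
  have h := Abelianization.commutator_subset_ker f hg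
  rw [MonoidHom.mem_ker, map_zpow] at h
  simpa [hd] using congrArg toAdd h

theorem MulAut.apply_eq_inv_of_zpow_apply_eq_inv {M : Type*} [Group M] (f : MulAut M) {k : ℤ}
    (hk : IsUnit k) {x : M} (hx : (f ^ k) x = x⁻¹) : f x = x⁻¹ := by
  rcases Int.isUnit_iff.mp hk with rfl | rfl
  · simpa using hx
  · rw [zpow_neg_one] at hx
    have h := congrArg f hx
    rw [MulAut.apply_inv_self, map_inv] at h
    exact inv_eq_iff_eq_inv.mp h.symm

namespace zAction

variable {V : Type*} [AddCommGroup V] (e : V ≃+ V)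

local notation "E" => Multiplicative V ⋊[zAction e] Multiplicative ℤ

open scoped commutatorElement

theorem inl_sub_mem_commutator (y : V) : (inl (ofAdd (e y - y)) : E) ∈ commutator E := by
  have h : ⁅(inr (ofAdd 1) : E), (inl (ofAdd y) : E)⁆ = inl (ofAdd (e y - y)) := by
    rw [commutatorElement_def, ← map_inv inr, ← inl_aut, ← map_inv, ← map_mul, sub_eq_add_neg]
    rfl
  exact h ▸ Subgroup.commutator_mem_commutator (Subgroup.mem_top _) (Subgroup.mem_top _)

theorem range_inl_characteristic (hcoker : ∀ u : V, ∃ d : ℤ, d ≠ 0 ∧ ∃ y, e y - y = d • u) :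
    (inl : Multiplicative V →* E).range.Characteristic := by
  rw [Subgroup.characteristic_iff_map_le]
  rintro ψ _ ⟨_, ⟨u, rfl⟩, rfl⟩
  obtain ⟨d, hd, y, hy⟩ := hcoker u.toAdd
  have h : ψ (inl u) ^ d ∈ commutator E := by
    rw [← map_zpow, ← map_zpow, show u ^ d = ofAdd (e y - y) by rw [hy]; rfl]
    exact Subgroup.characteristic_iff_map_le.mp inferInstance ψ
      ⟨_, inl_sub_mem_commutator e y, rfl⟩
  rw [range_inl_eq_ker_rightHom]
  exact rightHom.eq_one_of_zpow_mem_commutator hd h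

theorem inr_conj_inl_eq_inv_iff (v : V) :
    (inr (ofAdd 1) : E) * inl (ofAdd v) * (inr (ofAdd 1))⁻¹ = (inl (ofAdd v))⁻¹ ↔ e v = -v := by
  rw [← map_inv, ← inl_aut, ← map_inv, inl_injective.eq_iff]
  exact ofAdd.injective.eq_iff

theorem apply_eq_neg_of_conj_inl_eq_inv (g : E) (hg : IsUnit g.right.toAdd) (v : V)
    (h : g * inl (ofAdd v) * g⁻¹ = (inl (ofAdd v))⁻¹) : e v = -v := by
  rw [mul_inl_mul_inv, ← map_inv, inl_injective.eq_iff, ← ofAdd_toAdd g.right] at h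
  exact congrArg toAdd
    (MulAut.apply_eq_inv_of_zpow_apply_eq_inv (AddEquiv.toMultiplicative e) hg h)

end zAction

theorem eigenspace_neg_one_characteristic_general (n : ℕ) (A : Matrix (Fin n) (Fin n) ℤ)
    (h1 : (1 - A).det ≠ 0)
    (e : (Fin n → ℤ) ≃+ (Fin n → ℤ)) (he : ∀ v, e v = A.mulVec v) :
    (Subgroup.map SemidirectProduct.inl
        (AddSubgroup.toSubgroup
          (LinearMap.ker (A.mulVecLin +
            (LinearMap.id : (Fin n → ℤ) →ₗ[ℤ] Fin n → ℤ))).toAddSubgroup) :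
      Subgroup (Multiplicative (Fin n → ℤ) ⋊[zAction e] Multiplicative ℤ)).Characteristic := by
  have mem_ker (v : Fin n → ℤ) :
      v ∈ LinearMap.ker (A.mulVecLin + LinearMap.id) ↔ e v = -v := by
    simp [he, eq_neg_iff_add_eq_zero]
  have hcoker (u : Fin n → ℤ) : ∃ y, e y - y = (1 - A).det • u := by
    refine ⟨-Matrix.cramer (1 - A) u, ?_⟩
    rw [he, ← Matrix.mulVec_cramer, Matrix.sub_mulVec, Matrix.one_mulVec, Matrix.mulVec_neg]
    abel
  have hchar := zAction.range_inl_characteristic e fun u => ⟨_, h1, hcoker u⟩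
  rw [Subgroup.characteristic_iff_map_le]
  rintro ψ _ ⟨_, ⟨u, hu, rfl⟩, rfl⟩
  have hmap (x) : ψ (inl x) ∈ (inl : _ →* Multiplicative (Fin n → ℤ) ⋊[zAction e] _).range :=
    Subgroup.characteristic_iff_map_le.mp hchar ψ ⟨_, ⟨x, rfl⟩, rfl⟩
  obtain ⟨w, hw⟩ := hmap u
  have hconj := congrArg ψ ((zAction.inr_conj_inl_eq_inv_iff e u.toAdd).mpr ((mem_ker _).mp hu))
  simp only [ofAdd_toAdd, map_mul, map_inv] at hconj
  rw [← hw, ← ofAdd_toAdd w] at hconj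
  have hunit := isUnit_toAdd_rightHom_map_inr ψ hmap
  exact ⟨w, (mem_ker _).mpr (zAction.apply_eq_neg_of_conj_inl_eq_inv e _ hunit _ hconj), hw⟩

/-- If `A ∈ GL_n(ℤ)` does not have `1` as an eigenvalue, then the `-1`-eigenspace
`W₋₁ = {z ∈ ℤⁿ : A z = -z}` is a characteristic subgroup of `ℤⁿ ⋊_A ℤ`. -/
theorem eigenspace_neg_one_characteristic (n : ℕ) (A : Matrix (Fin n) (Fin n) ℤ)
    (hA : IsUnit A.det) (h1 : (1 - A).det ≠ 0)
    (e : (Fin n → ℤ) ≃+ (Fin n → ℤ)) (he : ∀ v, e v = A.mulVec v) :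
    (Subgroup.map SemidirectProduct.inl
        (AddSubgroup.toSubgroup
          (LinearMap.ker (A.mulVecLin +
            (LinearMap.id : (Fin n → ℤ) →ₗ[ℤ] Fin n → ℤ))).toAddSubgroup) :
      Subgroup (Multiplicative (Fin n → ℤ) ⋊[zAction e] Multiplicative ℤ)).Characteristic :=
  eigenspace_neg_one_characteristic_general n A h1 e he
end

section
/- Let A ∈ GL₂(ℤ) with trace squared less than 4 (equivalently, with non-real complex eigenvalues) and det(A) = 1. Then there is no integral solution (m, n, p) ∈ ℤ³ to the system −m² − np = 1 and (a−d)m + bp + cn = 0, where A = [[a,b],[c,d]]. -/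
/-!
With `M = [[m, n], [p, -m]]` the system says `det M = 1` and `tr (M A) = 0`. For such `m, n, p`
the discriminant `tr(A)² - 4` of the characteristic polynomial of `A` satisfies
`(tr(A)² - 4)(m² + 1) = (a - d)² + (bp - cn)²`, so it cannot be negative.
-/

theorem discr_mul_sq_add_one_eq_sq_add_sq {R : Type*} [CommRing R] {a b c d m n p : R}
    (hdet : a * d - b * c = 1) (hM : -m ^ 2 - n * p = 1) (htr : (a - d) * m + b * p + c * n = 0) :
    ((a + d) ^ 2 - 4) * (m ^ 2 + 1) = (a - d) ^ 2 + (b * p - c * n) ^ 2 := by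
  linear_combination 4 * (m ^ 2 + 1) * hdet - 4 * b * c * hM + ((a - d) * m - b * p - c * n) * htr

/-- For `A = [[a,b],[c,d]] ∈ SL₂(ℤ)` with `tr(A)² < 4` (non-real eigenvalues), the system
`-m² - np = 1`, `(a-d)m + bp + cn = 0` has no integral solution. -/
theorem no_integral_solution_complex_eigenvalues (a b c d : ℤ)
    (hdet : a * d - b * c = 1) (htr : (a + d) ^ 2 < 4) :
    ¬ ∃ m n p : ℤ, -m ^ 2 - n * p = 1 ∧ (a - d) * m + b * p + c * n = 0 := by
  rintro ⟨m, n, p, hM, hMA⟩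
  have hneg : ((a + d) ^ 2 - 4) * (m ^ 2 + 1) < 0 :=
    mul_neg_of_neg_of_pos (by linarith) (by positivity)
  rw [discr_mul_sq_add_one_eq_sq_add_sq hdet hM hMA] at hneg
  exact hneg.not_ge (by positivity)
end

section
/- Let n be odd and A ∈ GL_n(ℤ). If A is conjugate (in GL_n(ℚ) or GL_n(ℤ)) to A⁻¹, then det(A) is an eigenvalue of A, i.e., the characteristic polynomial of A vanishes at det(A). -/
/-!
If `P A P⁻¹ = A⁻¹` then `A` and `A⁻¹` have the same characteristic polynomial. On the other hand,
for `e = det A` with `e² = 1` and `n` odd, `det (e - A⁻¹) = det A⁻¹ · det (e A - 1) = -det (e - A)`,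
so `p_A(e) = -p_A(e)`, which forces `p_A(e) = 0` in characteristic zero.
-/

open Polynomial

namespace Matrix

variable {ι R : Type*} [Fintype ι] [DecidableEq ι] [CommRing R]

theorem charpoly_eq_of_mul_eq_mul {M N P : Matrix ι ι R} (hP : IsUnit P.det)
    (h : P * M = N * P) : M.charpoly = N.charpoly := by
  have hM : M = P⁻¹ * (N * P) := by
    rw [← h, ← Matrix.mul_assoc, nonsing_inv_mul _ hP, Matrix.one_mul]
  rw [hM, charpoly_mul_comm, Matrix.mul_assoc, mul_nonsing_inv _ hP, Matrix.mul_one]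

theorem eval_charpolyRev_eq_det (M : Matrix ι ι R) (r : R) :
    M.charpolyRev.eval r = (1 - r • M).det := by
  rw [charpolyRev, ← coe_evalRingHom, RingHom.map_det]
  congr
  ext i j
  by_cases hij : i = j <;> simp [hij, mul_comm r]

theorem eval_det_charpoly_inv_of_det_mul_self (hn : Odd (Fintype.card ι)) (M : Matrix ι ι R)
    (h : M.det * M.det = 1) : M⁻¹.charpoly.eval M.det = -M.charpoly.eval M.det := by
  set e := M.det
  have he : IsUnit e := .of_mul_eq_one _ h
  have he_inv : Ring.inverse e = e := by
    simpa using (Ring.inverse_mul_eq_iff_eq_mul e 1 e he).2 h.symm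
  have he_pow : e ^ Fintype.card ι = e := by
    obtain ⟨k, hk⟩ := hn
    rw [hk, pow_succ, pow_mul, sq, h, one_pow, one_mul]
  have hrev : 1 - e • M = e • (scalar ι e - M) := by
    rw [scalar_apply, ← smul_one_eq_diagonal, smul_sub, smul_smul, h, one_smul]
  rw [charpoly_inv M ((isUnit_iff_isUnit_det M).2 he), eval_mul, eval_mul, eval_C, eval_pow,
    eval_neg, eval_one, eval_charpolyRev_eq_det, hrev, det_smul, he_pow, he_inv,
    hn.neg_one_pow, ← eval_charpoly]
  linear_combination -M.charpoly.eval e * h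

theorem eval_det_charpoly_eq_zero_of_mul_eq_inv_mul [IsAddTorsionFree R]
    (hn : Odd (Fintype.card ι)) {M P : Matrix ι ι R} (hM : M.det * M.det = 1)
    (hP : IsUnit P.det) (h : P * M = M⁻¹ * P) : M.charpoly.eval M.det = 0 := by
  have hneg := eval_det_charpoly_inv_of_det_mul_self hn M hM
  rwa [← charpoly_eq_of_mul_eq_mul hP h, self_eq_neg] at hneg

theorem eval_det_charpoly_map_eq_zero_iff {S : Type*} [CommRing S] {f : R →+* S}
    (hf : Function.Injective f) (M : Matrix ι ι R) :
    (M.map f).charpoly.eval (M.map f).det = 0 ↔ M.charpoly.eval M.det = 0 := by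
  have hdet : (M.map f).det = f M.det := (f.map_det M).symm
  rw [charpoly_map, hdet, eval_map, eval₂_at_apply, map_eq_zero_iff f hf]

end Matrix

/-- If `n` is odd and `A ∈ GL_n(ℤ)` is conjugate (over `ℚ`, hence in particular if it is
conjugate over `ℤ`) to its inverse, then `det A` is an eigenvalue of `A`, i.e. the
characteristic polynomial of `A` vanishes at `det A`. -/
theorem det_is_eigenvalue_of_conjugate_to_inverse (n : ℕ) (hn : Odd n)
    (A : Matrix (Fin n) (Fin n) ℤ) (hA : IsUnit A.det)
    (hconj : ∃ P : Matrix (Fin n) (Fin n) ℚ, IsUnit P.det ∧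
      P * A.map ((↑) : ℤ → ℚ) = (A.map ((↑) : ℤ → ℚ))⁻¹ * P) :
    A.charpoly.eval A.det = 0 := by
  obtain ⟨P, hP, hPA⟩ := hconj
  have hdet : (A.map ((↑) : ℤ → ℚ)).det * (A.map ((↑) : ℤ → ℚ)).det = 1 := by
    rw [← Int.cast_det, ← Int.cast_mul, Int.isUnit_mul_self hA, Int.cast_one]
  rw [← Matrix.eval_det_charpoly_map_eq_zero_iff (Int.castRingHom ℚ).injective_int]
  exact Matrix.eval_det_charpoly_eq_zero_of_mul_eq_inv_mul (by rwa [Fintype.card_fin]) hdet hP hPA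
end

section
/- Let M ∈ GL₂(ℤ) have finite order and M ≠ ±I. Then the centraliser of M in GL₂(ℤ) is the subgroup generated by −I and M. -/
/-!
A non-scalar `A ∈ GL₂(ℤ)` satisfies `A ^ 2 = t • A - δ • 1` with `t = tr A` and `δ = det A = ±1`,
so `A ^ (k + 1) = U (k + 1) • A - (δ * U k) • 1` for the Lucas sequence `U` of `(t, δ)`, and
`A ^ n = 1` forces `U n = 0`. Unless `δ = 1, |t| ≤ 1` or `δ = -1, t = 0`, the sequence `U` never
returns to `0`, so the discriminant `D = t ^ 2 - 4 δ` of a finite-order `A ≠ ±1` is `-3`, `-4` or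
`4`.

If `N` commutes with `A`, the traceless matrices `2 • N - tr N • 1` and `2 • A - tr A • 1` are
proportional: `D • (2 • N - tr N • 1) = B • (2 • A - tr A • 1)`, where
`B = 2 tr (A N) - tr A tr N` is the polarisation of the discriminant, and `B ^ 2 = D * disc N`.
For `det N = ±1` and the three possible values of `D` this leaves `B ∈ {0, D, -D}`, hence
`N = x • 1 + y • A` with `y ∈ {0, 1, -1}`, and then `det N = ±1` forces `N ∈ {±1, ±A, ±A⁻¹}`.
-/

def lucasU (t δ : ℤ) : ℕ → ℤ
  | 0 => 0
  | 1 => 1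
  | k + 2 => t * lucasU t δ (k + 1) - δ * lucasU t δ k

theorem lucasU_add_two (t δ : ℤ) (k : ℕ) :
    lucasU t δ (k + 2) = t * lucasU t δ (k + 1) - δ * lucasU t δ k := rfl

theorem pow_succ_eq_lucasU {R : Type*} [Ring R] {a : R} {t δ : ℤ}
    (ha : a ^ 2 = t • a - δ • 1) (k : ℕ) :
    a ^ (k + 1) = lucasU t δ (k + 1) • a - (δ * lucasU t δ k) • 1 := by
  induction k with
  | zero => simp [lucasU]
  | succ k ih =>
    rw [pow_succ, ih, sub_mul, smul_mul_assoc, ← sq, ha, smul_mul_assoc, one_mul, lucasU_add_two]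
    module

theorem abs_lucasU_lt_succ {t : ℤ} (ht : 2 ≤ |t|) (k : ℕ) :
    |lucasU t 1 k| < |lucasU t 1 (k + 1)| := by
  induction k with
  | zero => simp [lucasU]
  | succ k ih =>
    have h : |t * lucasU t 1 (k + 1)| - |lucasU t 1 k| ≤ |lucasU t 1 (k + 2)| := by
      rw [lucasU_add_two, one_mul]
      exact abs_sub_abs_le_abs_sub _ _
    rw [abs_mul] at h
    nlinarith [abs_nonneg (lucasU t 1 (k + 1))]

theorem lucasU_succ_ne_zero_of_two_le_abs {t : ℤ} (ht : 2 ≤ |t|) (k : ℕ) :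
    lucasU t 1 (k + 1) ≠ 0 :=
  abs_pos.mp ((abs_nonneg _).trans_lt (abs_lucasU_lt_succ ht k))

theorem mul_lucasU_mul_lucasU_pos {t : ℤ} (ht : t ≠ 0) (k : ℕ) :
    0 < t * lucasU t (-1) (k + 1) * lucasU t (-1) (k + 2) := by
  induction k with
  | zero => simp [lucasU]; positivity
  | succ k ih =>
    rw [lucasU_add_two t _ (k + 1)]
    nlinarith [mul_pos (sq_pos_of_ne_zero ht) (sq_pos_of_ne_zero (right_ne_zero_of_mul ih.ne'))]

theorem lucasU_succ_ne_zero_of_ne_zero {t : ℤ} (ht : t ≠ 0) :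
    ∀ k : ℕ, lucasU t (-1) (k + 1) ≠ 0
  | 0 => by simp [lucasU]
  | k + 1 => fun h => by simpa [h] using mul_lucasU_mul_lucasU_pos ht k

theorem eq_zero_or_eq_or_eq_neg_of_sq_eq_mul {D e s B : ℤ} (hD : D = -3 ∨ D = -4 ∨ D = 4)
    (he : e = 1 ∨ e = -1) (h : B ^ 2 = D * (s ^ 2 - 4 * e)) : B = 0 ∨ B = D ∨ B = -D := by
  have hbound : |s| ≤ 2 ∧ |B| ≤ 4 := by
    have := sq_abs s
    have := sq_abs B
    have := abs_nonneg s
    have := abs_nonneg B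
    rcases hD with rfl | rfl | rfl
    · rcases he with rfl | rfl <;> constructor <;> nlinarith
    · rcases he with rfl | rfl <;> constructor <;> nlinarith
    · obtain ⟨b, rfl⟩ : 2 ∣ B :=
        Int.prime_two.dvd_of_dvd_pow (n := 2) ⟨2 * (s ^ 2 - 4 * e), by rw [h]; ring⟩
      have hb : b ^ 2 = s ^ 2 - 4 * e := by linarith
      have := sq_abs b
      have := abs_nonneg b
      rw [abs_mul, abs_two]
      rcases he with rfl | rfl
      · have : |b| < |s| := sq_lt_sq.mp (by linarith)
        constructor <;> nlinarith
      · have : |s| < |b| := sq_lt_sq.mp (by linarith)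
        have : |s| ≤ 1 := by nlinarith
        constructor <;> nlinarith
  rw [abs_le, abs_le] at hbound
  obtain ⟨⟨hs1, hs2⟩, hB1, hB2⟩ := hbound
  rcases hD with rfl | rfl | rfl <;> rcases he with rfl | rfl <;>
    interval_cases s <;> interval_cases B <;> omega

theorem eq_zero_or_eq_neg_of_sq_add_mul_add_eq {x t δ : ℤ}
    (htδ : (δ = 1 ∧ |t| ≤ 1) ∨ (δ = -1 ∧ t = 0))
    (h : x ^ 2 + x * t + δ = 1 ∨ x ^ 2 + x * t + δ = -1) : x = 0 ∨ (δ = 1 ∧ x = -t) := by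
  obtain ⟨ht1, ht2⟩ : -1 ≤ t ∧ t ≤ 1 := by
    rcases htδ with ⟨-, ht⟩ | ⟨-, rfl⟩
    · exact abs_le.mp ht
    · simp
  obtain ⟨hx1, hx2⟩ : -2 ≤ x ∧ x ≤ 2 := by
    constructor <;> rcases htδ with ⟨rfl, -⟩ | ⟨rfl, -⟩ <;> rcases h with h | h <;> nlinarith
  interval_cases x <;> interval_cases t <;> omega

namespace Matrix

variable {R : Type*} [CommRing R]

theorem sq_eq_trace_smul_sub_det_smul (A : Matrix (Fin 2) (Fin 2) R) :
    A ^ 2 = A.trace • A - A.det • 1 := by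
  ext i j
  fin_cases i <;> fin_cases j <;> simp [sq, mul_apply, trace_fin_two, det_fin_two] <;> ring

theorem adjugate_fin_two_eq_trace_smul_sub (A : Matrix (Fin 2) (Fin 2) R) :
    adjugate A = A.trace • 1 - A := by
  ext i j
  fin_cases i <;> fin_cases j <;> simp [adjugate_fin_two, trace_fin_two]

theorem det_smul_one_add_smul (A : Matrix (Fin 2) (Fin 2) R) (x y : R) :
    (x • 1 + y • A).det = x ^ 2 + x * y * A.trace + y ^ 2 * A.det := by
  simp [det_fin_two, trace_fin_two]
  ring

theorem eq_zero_of_smul_mem_range_scalar [NoZeroDivisors R] {A : Matrix (Fin 2) (Fin 2) R}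
    (hA : A ∉ Set.range (scalar (Fin 2))) {r : R} (h : r • A ∈ Set.range (scalar (Fin 2))) :
    r = 0 := by
  obtain ⟨c, hc⟩ := h
  by_contra hr
  refine hA ⟨A 0 0, ?_⟩
  have e : ∀ i j, scalar (Fin 2) c i j = r * A i j := fun i j => by rw [hc]; rfl
  have e01 := e 0 1
  have e10 := e 1 0
  have e11 := (e 0 0).symm.trans (e 1 1)
  simp [hr] at e01 e10 e11
  ext i j
  fin_cases i <;> fin_cases j <;> simp [e01, e10, e11]

theorem det_trace_of_isOfFinOrder {A : Matrix (Fin 2) (Fin 2) ℤ}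
    (hA : A ∉ Set.range (scalar (Fin 2))) (hfin : IsOfFinOrder A) :
    (A.det = 1 ∧ |A.trace| ≤ 1) ∨ (A.det = -1 ∧ A.trace = 0) := by
  obtain ⟨n, hn, hAn⟩ := isOfFinOrder_iff_pow_eq_one.mp hfin
  have hdet : A.det = 1 ∨ A.det = -1 :=
    Int.isUnit_iff.mp (IsUnit.of_pow_eq_one (by rw [← det_pow, hAn, det_one]) hn.ne')
  obtain ⟨k, rfl⟩ : ∃ k, n = k + 1 := ⟨n - 1, by omega⟩
  have hU : lucasU A.trace A.det (k + 1) = 0 := by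
    refine eq_zero_of_smul_mem_range_scalar hA ⟨1 + A.det * lucasU A.trace A.det k, ?_⟩
    rw [pow_succ_eq_lucasU A.sq_eq_trace_smul_sub_det_smul, sub_eq_iff_eq_add] at hAn
    rw [hAn, map_add, map_one, scalar_apply, ← smul_one_eq_diagonal]
  rcases hdet with hdet | hdet <;> rw [hdet] at hU
  · exact .inl ⟨hdet, not_lt.mp fun ht => lucasU_succ_ne_zero_of_two_le_abs ht k hU⟩
  · exact .inr ⟨hdet, by_contra fun ht => lucasU_succ_ne_zero_of_ne_zero ht k hU⟩

theorem entries_eq_of_commute {A N : Matrix (Fin 2) (Fin 2) R} (h : Commute A N) :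
    A 0 1 * N 1 0 = N 0 1 * A 1 0 ∧
    N 0 1 * (A 0 0 - A 1 1) = A 0 1 * (N 0 0 - N 1 1) ∧
    A 1 0 * (N 0 0 - N 1 1) = N 1 0 * (A 0 0 - A 1 1) := by
  have e := congrFun₂ h.eq
  have e00 := e 0 0
  have e01 := e 0 1
  have e10 := e 1 0
  simp only [mul_apply, Fin.sum_univ_two] at e00 e01 e10
  exact ⟨by linear_combination e00, by linear_combination e01, by linear_combination e10⟩

theorem discr_smul_eq_of_commute {A N : Matrix (Fin 2) (Fin 2) R} (h : Commute A N) :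
    A.discr • ((2 : R) • N - N.trace • 1) =
      (2 * (A * N).trace - A.trace * N.trace) • ((2 : R) • A - A.trace • 1) := by
  obtain ⟨e1, e2, e3⟩ := entries_eq_of_commute h
  ext i j
  fin_cases i <;> fin_cases j <;> simp [discr_fin_two, trace_fin_two, det_fin_two, mul_apply]
  · linear_combination 2 * A 0 1 * e3 - 2 * A 1 0 * e2
  · linear_combination 2 * (A 0 0 - A 1 1) * e2 - 4 * A 0 1 * e1
  · linear_combination -2 * (A 0 0 - A 1 1) * e3 + 4 * A 1 0 * e1
  · linear_combination -2 * A 0 1 * e3 + 2 * A 1 0 * e2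

theorem sq_eq_discr_mul_discr_of_commute {A N : Matrix (Fin 2) (Fin 2) R} (h : Commute A N) :
    (2 * (A * N).trace - A.trace * N.trace) ^ 2 = A.discr * N.discr := by
  obtain ⟨e1, e2, e3⟩ := entries_eq_of_commute h
  simp only [discr_fin_two, trace_fin_two, det_fin_two, mul_apply, Fin.sum_univ_two]
  linear_combination 4 * (A 0 1 * N 1 0 - N 0 1 * A 1 0) * e1 +
    4 * (A 1 0 * (N 0 0 - N 1 1) - N 1 0 * (A 0 0 - A 1 1)) * e2

theorem exists_eq_smul_one_add_smul_of_commute {A N : Matrix (Fin 2) (Fin 2) ℤ}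
    (hA : (A.det = 1 ∧ |A.trace| ≤ 1) ∨ (A.det = -1 ∧ A.trace = 0))
    (hN : N.det = 1 ∨ N.det = -1) (h : Commute A N) :
    ∃ x y : ℤ, (y = 0 ∨ y = 1 ∨ y = -1) ∧ N = x • 1 + y • A := by
  have hD : A.discr = -3 ∨ A.discr = -4 ∨ A.discr = 4 := by
    rw [discr_fin_two]
    rcases hA with ⟨hδ, ht⟩ | ⟨hδ, ht⟩
    · obtain ht | ht | ht : A.trace = -1 ∨ A.trace = 0 ∨ A.trace = 1 := by
        rw [abs_le] at ht; omega
      all_goals simp [hδ, ht]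
    · simp [hδ, ht]
  obtain ⟨y, hy, hB⟩ : ∃ y : ℤ, (y = 0 ∨ y = 1 ∨ y = -1) ∧
      2 * (A * N).trace - A.trace * N.trace = y * A.discr := by
    rcases eq_zero_or_eq_or_eq_neg_of_sq_eq_mul hD hN
        ((sq_eq_discr_mul_discr_of_commute h).trans (by rw [discr_fin_two N])) with hB | hB | hB
    · exact ⟨0, .inl rfl, by simp [hB]⟩
    · exact ⟨1, .inr (.inl rfl), by simp [hB]⟩
    · exact ⟨-1, .inr (.inr rfl), by simp [hB]⟩
  have hlin : (2 : ℤ) • N - N.trace • 1 = y • ((2 : ℤ) • A - A.trace • 1) := by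
    refine smul_right_injective _ (show A.discr ≠ 0 by omega) ?_
    dsimp only
    rw [discr_smul_eq_of_commute h, hB, mul_comm, mul_smul]
  refine ⟨N 0 0 - y * A 0 0, y, hy, ?_⟩
  ext i j
  have hij := congrFun₂ hlin i j
  fin_cases i <;> fin_cases j <;>
    simp only [add_apply, sub_apply, smul_apply, one_apply, smul_eq_mul, trace_fin_two] at hij ⊢ <;>
    norm_num at hij ⊢ <;> linarith

theorem coe_units_notMem_range_scalar {M : (Matrix (Fin 2) (Fin 2) ℤ)ˣ} (h1 : M ≠ 1)
    (h2 : M ≠ -1) : (M : Matrix (Fin 2) (Fin 2) ℤ) ∉ Set.range (scalar (Fin 2)) := by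
  rintro ⟨c, hc⟩
  have hdet : IsUnit (M : Matrix (Fin 2) (Fin 2) ℤ).det := M.isUnit.map detMonoidHom
  rw [← hc, scalar_apply, det_diagonal, Fin.prod_univ_two, ← sq] at hdet
  rcases Int.isUnit_iff.mp ((isUnit_pow_iff two_ne_zero).mp hdet) with rfl | rfl
  · exact h1 (Units.ext (by simp [← hc]))
  · exact h2 (Units.ext (by simp [← hc]))

theorem units_eq_zpow_or_neg_zpow_of_coe_eq {M N : (Matrix (Fin 2) (Fin 2) ℤ)ˣ}
    (hM : (M.val.det = 1 ∧ |M.val.trace| ≤ 1) ∨ (M.val.det = -1 ∧ M.val.trace = 0))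
    {x y : ℤ} (hy : y = 0 ∨ y = 1 ∨ y = -1) (hN : N.val = x • 1 + y • M.val) :
    ∃ k : ℤ, N = M ^ k ∨ N = -M ^ k := by
  have hdet : N.val.det = 1 ∨ N.val.det = -1 := Int.isUnit_iff.mp (N.isUnit.map detMonoidHom)
  rw [hN, det_smul_one_add_smul] at hdet
  have hadj := mul_adjugate M.val
  rw [adjugate_fin_two_eq_trace_smul_sub] at hadj
  rcases hy with rfl | rfl | rfl
  · have hx : x ^ 2 = 1 := by rcases hdet with h | h <;> nlinarith
    refine ⟨0, ?_⟩
    rcases sq_eq_one_iff.mp hx with rfl | rfl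
    · exact .inl (Units.ext (by simp [hN]))
    · exact .inr (Units.ext (by simp [hN]))
  · rcases eq_zero_or_eq_neg_of_sq_add_mul_add_eq hM
        (by simpa only [mul_one, one_pow, one_mul] using hdet) with rfl | ⟨hδ, rfl⟩
    · exact ⟨1, .inl (Units.ext (by simp [hN]))⟩
    · have hnegN : -N.val = M.val.trace • 1 - M.val := by
        rw [hN]; module
      have hMN : M * -N = 1 := Units.ext <| by
        rw [Units.val_mul, Units.val_neg, hnegN, hadj, hδ, one_smul, Units.val_one]
      refine ⟨-1, .inr ?_⟩
      rw [_root_.zpow_neg_one, ← eq_inv_of_mul_eq_one_right hMN, neg_neg]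
  · have hM' : (M.val.det = 1 ∧ |-M.val.trace| ≤ 1) ∨ (M.val.det = -1 ∧ -M.val.trace = 0) := by
      rwa [abs_neg, neg_eq_zero]
    rcases eq_zero_or_eq_neg_of_sq_add_mul_add_eq hM'
        (by simpa only [mul_neg, mul_one, neg_mul, one_mul, neg_one_sq] using hdet) with
      rfl | ⟨hδ, hx⟩
    · exact ⟨1, .inr (Units.ext (by simp [hN]))⟩
    · have hN' : N.val = M.val.trace • 1 - M.val := by
        rw [hN, hx, neg_neg]; module
      have hMN : M * N = 1 := Units.ext <| by
        rw [Units.val_mul, hN', hadj, hδ, one_smul, Units.val_one]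
      exact ⟨-1, .inl (by rw [_root_.zpow_neg_one, ← eq_inv_of_mul_eq_one_right hMN])⟩

end Matrix

/-- Let `M ∈ GL₂(ℤ)` have finite order and `M ≠ ±I`. Then the centraliser of `M` in
`GL₂(ℤ)` is the subgroup generated by `-I` and `M`. -/
theorem centralizer_of_finite_order_matrix (M : (Matrix (Fin 2) (Fin 2) ℤ)ˣ)
    (hfin : IsOfFinOrder M) (h1 : M ≠ 1) (h2 : M ≠ -1) :
    Subgroup.centralizer {M} = Subgroup.closure {-1, M} := by
  have hA := Matrix.det_trace_of_isOfFinOrder (Matrix.coe_units_notMem_range_scalar h1 h2)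
    (Units.isOfFinOrder_val.mpr hfin)
  have hneg : (-1 : (Matrix (Fin 2) (Fin 2) ℤ)ˣ) ∈ Subgroup.closure {-1, M} :=
    Subgroup.subset_closure (by simp)
  have hM : M ∈ Subgroup.closure {-1, M} := Subgroup.subset_closure (by simp)
  refine le_antisymm (fun N hN => ?_) ?_
  · have hMN : Commute M N := (Subgroup.mem_centralizer_singleton_iff.mp hN).symm
    obtain ⟨x, y, hy, hxy⟩ := Matrix.exists_eq_smul_one_add_smul_of_commute hA
      (Int.isUnit_iff.mp (N.isUnit.map Matrix.detMonoidHom)) hMN.units_val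
    obtain ⟨k, rfl | rfl⟩ := Matrix.units_eq_zpow_or_neg_zpow_of_coe_eq hA hy hxy
    · exact zpow_mem hM k
    · rw [← neg_one_mul (M ^ k)]
      exact mul_mem hneg (zpow_mem hM k)
  · rw [Subgroup.closure_le]
    rintro _ (rfl | rfl) <;> simp [Subgroup.mem_centralizer_singleton_iff]
end

section
/- Let E = (ℤ² ⋊_{−I} ℤ) ⋊_ψ ℤ where the action ψ of the generator u satisfies ψ(z t^k) = A(z)(n₀ t)^k for z ∈ ℤ², with n₀ ∈ ℤ² and A ∈ GL₂(ℤ). Then the subgroup ℤ² is characteristic in E. -/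
/-- The negation automorphism of an additive abelian group. -/
def negAut (V : Type*) [AddCommGroup V] : V ≃+ V :=
  ⟨Equiv.neg V, fun a b => neg_add a b⟩

/-- The group `ℤ² ⋊_{-I} ℤ`, with generator `t` of the `ℤ` factor acting by `-I`. -/
abbrev G0 : Type :=
  Multiplicative (Fin 2 → ℤ) ⋊[zAction (negAut (Fin 2 → ℤ))] Multiplicative ℤ

open SemidirectProduct Multiplicative
open scoped commutatorElement

theorem Subgroup.characteristic_of_forall_mem_iff_mul_self_mem_commutator {G : Type*} [Group G]
    (H : Subgroup G) (hH : ∀ g, g ∈ H ↔ g * g ∈ _root_.commutator G) : H.Characteristic := by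
  refine characteristic_iff_map_le.mpr fun φ => ?_
  rintro _ ⟨g, hg, rfl⟩
  have hcomm : (_root_.commutator G).map φ.toMonoidHom = _root_.commutator G :=
    characteristic_iff_map_eq.mp inferInstance φ
  rw [hH, ← map_mul, ← hcomm]
  exact mem_map_of_mem _ ((hH g).mp hg)

theorem MonoidHom.ker_characteristic_of_mul_self_mem_commutator {G A : Type*} [Group G]
    [CommGroup A] [IsMulTorsionFree A] (f : G →* A)
    (hf : ∀ g ∈ f.ker, g * g ∈ commutator G) : f.ker.Characteristic := by
  refine Subgroup.characteristic_of_forall_mem_iff_mul_self_mem_commutator _ fun g =>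
    ⟨hf g, fun hg => ?_⟩
  have hsq : f g ^ 2 = 1 ^ 2 := by
    rw [one_pow, sq, ← map_mul]
    exact Abelianization.commutator_subset_ker f hg
  exact IsMulTorsionFree.pow_left_injective two_ne_zero hsq

theorem MonoidHom.apply_mulAut_eq_of_apply_ofAdd_one {G K : Type*} [Group G] [Group K]
    (f : G →* K) (ψ : Multiplicative ℤ →* MulAut G) (h : ∀ x, f (ψ (ofAdd 1) x) = f x)
    (g : Multiplicative ℤ) (x : G) : f (ψ g x) = f x := by
  rw [ψ.apply_mint]
  revert x
  refine zpow_induction_right (P := fun σ : MulAut G => ∀ x, f (σ x) = f x) (fun _ => rfl)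
    (fun σ hσ x => (hσ _).trans (h x))
    (fun σ hσ x => (hσ _).trans (by simpa using (h ((ψ (ofAdd 1))⁻¹ x)).symm)) _

theorem SemidirectProduct.exists_ker_eq_map_inl {N G K : Type*} [Group N] [Group G] [CommGroup K]
    (φ : G →* MulAut N) (f : N →* K) (hf : ∀ g n, f (φ g n) = f n) :
    ∃ Φ : N ⋊[φ] G →* K × G, Φ.ker = f.ker.map inl := by
  refine ⟨(lift f 1 fun g => by ext n; simpa using hf g n).prod rightHom, le_antisymm ?_ ?_⟩
  · intro x hx
    rw [MonoidHom.mem_ker, MonoidHom.prod_apply, Prod.mk_eq_one] at hx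
    obtain ⟨n, rfl⟩ : x ∈ (inl : N →* N ⋊[φ] G).range := by
      rw [range_inl_eq_ker_rightHom]
      exact hx.2
    exact ⟨n, by simpa using hx.1, rfl⟩
  · rintro _ ⟨n, hn, rfl⟩
    simpa using hn

@[simp]
theorem negAut_apply {V : Type*} [AddCommGroup V] (v : V) : negAut V v = -v := rfl

theorem SemidirectProduct.commutatorElement_inl_inr_negAut {V : Type*} [AddCommGroup V]
    (v : Multiplicative V) :
    ⁅(inl v : Multiplicative V ⋊[zAction (negAut V)] Multiplicative ℤ),
      (inr (ofAdd 1) : Multiplicative V ⋊[zAction (negAut V)] Multiplicative ℤ)⁆ =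
      inl (v * v) := by
  rw [commutatorElement_def, mul_assoc, mul_assoc, ← mul_assoc (inr _), ← map_inv, ← map_inv,
    ← inl_aut, ← map_mul]
  simp [zAction]

theorem Z2_characteristic_in_iterated_semidirect_general (A : Matrix (Fin 2) (Fin 2) ℤ)
    (n₀ : Fin 2 → ℤ) (ψ : Multiplicative ℤ →* MulAut G0)
    (hψ1 : ∀ z : Fin 2 → ℤ,
      ψ (Multiplicative.ofAdd 1) (SemidirectProduct.inl (Multiplicative.ofAdd z)) =
        SemidirectProduct.inl (Multiplicative.ofAdd (A.mulVec z)))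
    (hψ2 : ψ (Multiplicative.ofAdd 1) (SemidirectProduct.inr (Multiplicative.ofAdd 1)) =
      SemidirectProduct.inl (Multiplicative.ofAdd n₀) *
        SemidirectProduct.inr (Multiplicative.ofAdd 1)) :
    ((SemidirectProduct.inl.comp SemidirectProduct.inl).range :
      Subgroup (G0 ⋊[ψ] Multiplicative ℤ)).Characteristic := by
  have hgen : rightHom.comp (ψ (ofAdd 1)).toMonoidHom = (rightHom : G0 →* _) := by
    refine hom_ext (MonoidHom.ext fun z => ?_) (MonoidHom.ext_mint ?_)
    · simpa using congrArg right (hψ1 (toAdd z))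
    · simp [hψ2]
  obtain ⟨Φ, hΦ⟩ := exists_ker_eq_map_inl ψ rightHom
    (rightHom.apply_mulAut_eq_of_apply_ofAdd_one ψ (DFunLike.congr_fun hgen))
  have hH : (inl.comp inl).range = Φ.ker := by
    rw [hΦ, ← range_inl_eq_ker_rightHom, MonoidHom.map_range]
  rw [hH]
  refine Φ.ker_characteristic_of_mul_self_mem_commutator fun _ hg => ?_
  obtain ⟨v, rfl⟩ := hH ▸ hg
  rw [MonoidHom.comp_apply, ← map_mul, ← map_mul, ← commutatorElement_inl_inr_negAut,
    map_commutatorElement]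
  exact Subgroup.commutator_mem_commutator (Subgroup.mem_top _) (Subgroup.mem_top _)

/-- In `E = (ℤ² ⋊_{-I} ℤ) ⋊_ψ ℤ`, where the generator `u` acts by
`ψ(z t^k) = A(z) (n₀ t)^k`, the subgroup `ℤ²` is characteristic. -/
theorem Z2_characteristic_in_iterated_semidirect (A : Matrix (Fin 2) (Fin 2) ℤ)
    (hA : IsUnit A.det) (n₀ : Fin 2 → ℤ) (ψ : Multiplicative ℤ →* MulAut G0)
    (hψ1 : ∀ z : Fin 2 → ℤ,
      ψ (Multiplicative.ofAdd 1) (SemidirectProduct.inl (Multiplicative.ofAdd z)) =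
        SemidirectProduct.inl (Multiplicative.ofAdd (A.mulVec z)))
    (hψ2 : ψ (Multiplicative.ofAdd 1) (SemidirectProduct.inr (Multiplicative.ofAdd 1)) =
      SemidirectProduct.inl (Multiplicative.ofAdd n₀) *
        SemidirectProduct.inr (Multiplicative.ofAdd 1)) :
    ((SemidirectProduct.inl.comp SemidirectProduct.inl).range :
      Subgroup (G0 ⋊[ψ] Multiplicative ℤ)).Characteristic :=
  Z2_characteristic_in_iterated_semidirect_general A n₀ ψ hψ1 hψ2
end
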